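/- Let d ≥ 1, let A ⊆ ℝ^d be a closed set with nonempty interior, and let B ⊆ ℝ^d be the closed ball of some radius R > 0 centered at the origin. Then the Fourier restriction map from functions supported in A to L²(B) has dense image: for every square-integrable g : B → ℂ and every ε > 0 there exists φ : ℝ^d → ℂ, integrable and square-integrable, with support contained in A, such that ∫_B |𝓕φ(ξ) − g(ξ)|² dξ < ε². -/

import Mathlib

set_option maxHeartbeats 1000000

open MeasureTheory

/-- The Fourier transform `𝓕g(ξ) = ∫ g(x) e^{−i⟨x,ξ⟩} dx` on `ℝ^d`. -/
noncomputable def ftransform {d : ℕ} (g : EuclideanSpace ℝ (Fin d) → ℂ)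
    (ξ : EuclideanSpace ℝ (Fin d)) : ℂ :=
  ∫ x : EuclideanSpace ℝ (Fin d), g x * Complex.exp (-(Complex.I * ((inner ℝ x ξ : ℝ) : ℂ)))

namespace FDense

open Metric Complex Filter Set

abbrev Ed (d : ℕ) := EuclideanSpace ℝ (Fin d)

variable {d : ℕ}

noncomputable def nk (x ξ : Ed d) : ℂ := Complex.exp (-(Complex.I * ((inner ℝ x ξ : ℝ) : ℂ)))
noncomputable def pk (x ξ : Ed d) : ℂ := Complex.exp (Complex.I * ((inner ℝ x ξ : ℝ) : ℂ))

lemma norm_nk (x ξ : Ed d) : ‖nk x ξ‖ = 1 := by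
  rw [nk, Complex.norm_exp]
  simp

lemma norm_pk (x ξ : Ed d) : ‖pk x ξ‖ = 1 := by
  rw [pk, Complex.norm_exp]
  simp

lemma conj_nk (x ξ : Ed d) : (starRingEnd ℂ) (nk x ξ) = pk x ξ := by
  rw [nk, pk, ← Complex.exp_conj]
  congr 1
  simp

lemma pk_mul (x y ξ : Ed d) : pk x ξ * pk y ξ = pk (x + y) ξ := by
  rw [pk, pk, pk, ← Complex.exp_add]
  congr 1
  rw [inner_add_left]
  push_cast
  ring

lemma pk_zero (ξ : Ed d) : pk (0 : Ed d) ξ = 1 := by simp [pk]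

lemma conj_pk (x ξ : Ed d) : (starRingEnd ℂ) (pk x ξ) = pk (-x) ξ := by
  rw [pk, pk, ← Complex.exp_conj]
  congr 1
  rw [inner_neg_left]
  push_cast
  simp

lemma continuous_pk (x : Ed d) : Continuous (pk x) :=
  Complex.continuous_exp.comp <| continuous_const.mul <|
    Complex.continuous_ofReal.comp <| Continuous.inner continuous_const continuous_id

lemma continuous_nk (x : Ed d) : Continuous (nk x) :=
  Complex.continuous_exp.comp <| Continuous.neg <| continuous_const.mul <|
    Complex.continuous_ofReal.comp <| Continuous.inner continuous_const continuous_id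

lemma norm_exp_neg_I_sub (a b : ℝ) :
    ‖Complex.exp (-(Complex.I * (a : ℂ))) - Complex.exp (-(Complex.I * (b : ℂ)))‖ ≤ |a - b| := by
  have hder : ∀ t : ℝ, HasDerivAt (fun t : ℝ => Complex.exp (-(Complex.I * (t : ℂ))))
      (Complex.exp (-(Complex.I * (t : ℂ))) * (-Complex.I)) t := by
    intro t
    have h0 : HasDerivAt (fun t : ℝ => (t : ℂ)) 1 t := Complex.ofRealCLM.hasDerivAt
    have h1 := (h0.const_mul Complex.I).neg
    simpa using h1.cexp
  have := Convex.norm_image_sub_le_of_norm_hasDerivWithin_le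
    (f := fun t : ℝ => Complex.exp (-(Complex.I * (t : ℂ))))
    (f' := fun t : ℝ => Complex.exp (-(Complex.I * (t : ℂ))) * (-Complex.I))
    (s := Set.univ) (C := 1)
    (fun t _ => (hder t).hasDerivWithinAt)
    (fun t _ => by
      rw [norm_mul, norm_neg, Complex.norm_I, mul_one, Complex.norm_exp]
      simp)
    convex_univ (Set.mem_univ b) (Set.mem_univ a)
  simpa [Real.norm_eq_abs] using this

lemma norm_nk_sub_nk (x y ξ : Ed d) : ‖nk x ξ - nk y ξ‖ ≤ ‖x - y‖ * ‖ξ‖ := by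
  refine (norm_exp_neg_I_sub _ _).trans ?_
  have : (inner ℝ x ξ : ℝ) - inner ℝ y ξ = inner ℝ (x - y) ξ := (inner_sub_left x y ξ).symm
  rw [this]
  exact abs_real_inner_le_norm _ _


lemma continuous_nk' (ξ : Ed d) : Continuous (fun y : Ed d => nk y ξ) := by
  unfold nk
  exact Complex.continuous_exp.comp <| Continuous.neg <| continuous_const.mul <|
    Complex.continuous_ofReal.comp <| Continuous.inner continuous_id continuous_const

instance finB (R : ℝ) : IsFiniteMeasure (volume.restrict (closedBall (0 : Ed d) R)) :=
  ⟨by rw [Measure.restrict_apply_univ]; exact measure_closedBall_lt_top⟩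

lemma memℒp_nk (R : ℝ) (x : Ed d) :
    MemLp (nk x) 2 (volume.restrict (closedBall (0 : Ed d) R)) :=
  MemLp.of_bound (continuous_nk x).aestronglyMeasurable 1
    (Filter.Eventually.of_forall fun ξ => le_of_eq (norm_nk x ξ))

lemma integrable_mul_nk {φ : Ed d → ℂ} (hφ : Integrable φ volume) (ξ : Ed d) :
    Integrable (fun y => φ y * nk y ξ) volume := by
  have : (fun y => φ y * nk y ξ) = fun y => (fun y' : Ed d => nk y' ξ) y * φ y :=
    funext fun y => mul_comm _ _
  rw [this]
  exact hφ.bdd_mul (continuous_nk' ξ).aestronglyMeasurable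
    (Filter.Eventually.of_forall fun y => le_of_eq (norm_nk y ξ))

lemma ftransform_apply (φ : Ed d → ℂ) (ξ : Ed d) :
    ftransform φ ξ = ∫ y : Ed d, φ y * nk y ξ := rfl

lemma ftransform_sum {n : ℕ} (c : Fin n → ℂ) (φ : Fin n → (Ed d → ℂ))
    (hφ : ∀ i, Integrable (φ i) volume) (ξ : Ed d) :
    ftransform (fun y => ∑ i, c i • φ i y) ξ = ∑ i, c i * ftransform (φ i) ξ := by
  rw [ftransform_apply]
  have : (fun y => (∑ i, c i • φ i y) * nk y ξ)
      = fun y => ∑ i, c i • (φ i y * nk y ξ) := by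
    funext y
    rw [Finset.sum_mul]
    refine Finset.sum_congr rfl fun i _ => ?_
    simp [smul_eq_mul]; ring
  rw [this, integral_finset_sum (μ := volume) Finset.univ
    (f := fun i (y : Ed d) => c i • (φ i y * nk y ξ))
    (fun i _ => ((integrable_mul_nk (hφ i) ξ).smul (c i)))]
  refine Finset.sum_congr rfl fun i _ => ?_
  rw [integral_smul, smul_eq_mul, ftransform_apply]

/-- The bump approximation lemma. -/
lemma bump (R : ℝ) (hR : 0 < R) (x : Ed d) {r : ℝ} (hr : 0 < r) :
    ∃ φ : Ed d → ℂ, Integrable φ volume ∧ MemLp φ 2 volume ∧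
      Function.support φ ⊆ closedBall x r ∧
      ∀ ξ ∈ closedBall (0 : Ed d) R, ‖ftransform φ ξ - nk x ξ‖ ≤ r * R := by
  set s := closedBall x r with hs
  have hmeas : MeasurableSet s := measurableSet_closedBall
  have hv0 : 0 < volume s :=
    lt_of_lt_of_le (measure_ball_pos volume x hr) (measure_mono ball_subset_closedBall)
  have hvt : volume s < ⊤ := measure_closedBall_lt_top
  have hvpos : 0 < (volume s).toReal := ENNReal.toReal_pos hv0.ne' hvt.ne
  set c : ℂ := (((volume s).toReal : ℝ) : ℂ)⁻¹ with hc
  refine ⟨s.indicator fun _ => c, ?_, ?_, Set.support_indicator_subset, ?_⟩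
  · rw [integrable_indicator_iff hmeas]
    exact integrableOn_const hvt.ne
  · exact memLp_indicator_const 2 hmeas c (Or.inr hvt.ne)
  · intro ξ hξ
    have hnorm : ‖ξ‖ ≤ R := by simpa [mem_closedBall, dist_zero_right] using hξ
    have hint : IntegrableOn (fun y => nk y ξ) s volume :=
      (continuous_nk' ξ).continuousOn.integrableOn_compact (isCompact_closedBall x r)
    have hf : ftransform (s.indicator fun _ => c) ξ = c * ∫ y in s, nk y ξ := by
      rw [ftransform_apply]
      have : (fun y => (s.indicator fun _ => c) y * nk y ξ)
          = s.indicator fun y => c * nk y ξ := by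
        funext y
        by_cases hy : y ∈ s <;> simp [hy]
      rw [this, integral_indicator hmeas, integral_const_mul]
    have hcv : c * (((volume s).toReal : ℝ) : ℂ) = 1 := by
      rw [hc]
      exact inv_mul_cancel₀ (by exact_mod_cast hvpos.ne')
    have hconst : c * ∫ _ in s, nk x ξ = nk x ξ := by
      rw [setIntegral_const, measureReal_def, Complex.real_smul, ← mul_assoc, hcv, one_mul]
    have hdiff : ftransform (s.indicator fun _ => c) ξ - nk x ξ
        = c * ∫ y in s, (nk y ξ - nk x ξ) := by
      rw [integral_sub hint (integrableOn_const hvt.ne), mul_sub, hconst, hf]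
    rw [hdiff, norm_mul]
    have hb : ‖∫ y in s, (nk y ξ - nk x ξ)‖ ≤ (r * R) * (volume s).toReal := by
      refine norm_setIntegral_le_of_norm_le_const hvt (fun y hy => ?_)
      · calc ‖nk y ξ - nk x ξ‖ ≤ ‖y - x‖ * ‖ξ‖ := norm_nk_sub_nk y x ξ
          _ ≤ r * R := by
              have : ‖y - x‖ ≤ r := by rwa [← dist_eq_norm, ← mem_closedBall]
              exact mul_le_mul this hnorm (norm_nonneg _) hr.le
    have hcnorm : ‖c‖ = ((volume s).toReal)⁻¹ := by
      rw [hc, norm_inv, Complex.norm_real, Real.norm_eq_abs, abs_of_pos hvpos]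
    calc ‖c‖ * ‖∫ y in s, (nk y ξ - nk x ξ)‖
        ≤ ((volume s).toReal)⁻¹ * ((r * R) * (volume s).toReal) := by
          rw [hcnorm]
          exact mul_le_mul_of_nonneg_left hb (by positivity)
      _ = r * R := by field_simp

lemma dense_exp_span (d : ℕ) (R : ℝ) (hR : 0 < R) (U : Set (Ed d)) (hU : IsOpen U)
    (hUne : U.Nonempty) :
    (Submodule.span ℂ ((fun x => (memℒp_nk R x).toLp (nk x)) '' U)).topologicalClosure = ⊤ := by
  classical
  set B := closedBall (0 : Ed d) R with hB
  set μ := volume.restrict B with hμ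
  rw [Submodule.topologicalClosure_eq_top_iff, Submodule.eq_bot_iff]
  intro h hmem
  rw [Submodule.mem_orthogonal] at hmem
  have hInt : Integrable (fun ξ => h ξ) μ := (Lp.memLp h).integrable one_le_two
  have hIntMul : ∀ x : Ed d, Integrable (fun ξ => pk x ξ * h ξ) μ := fun x =>
    hInt.bdd_mul (continuous_pk x).aestronglyMeasurable
      (Filter.Eventually.of_forall fun ξ => le_of_eq (norm_pk x ξ))
  set F : Ed d → ℂ := fun x => ∫ ξ, pk x ξ * h ξ ∂μ with hF
  -- step 1 : F vanishes on U
  have hF0 : ∀ x ∈ U, F x = 0 := by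
    intro x hx
    have h0 := hmem _ (Submodule.subset_span ⟨x, hx, rfl⟩)
    rw [L2.inner_def] at h0
    rw [hF]
    rw [← h0]
    apply integral_congr_ae
    filter_upwards [MemLp.coeFn_toLp (memℒp_nk R x)] with ξ hξ
    rw [RCLike.inner_apply, hξ, conj_nk, mul_comm]
  -- step 2 : analytic continuation, F vanishes everywhere
  have haeB : ∀ᵐ ξ ∂μ, ξ ∈ B := ae_restrict_mem measurableSet_closedBall
  have hqc : ∀ w : Ed d, Continuous fun ξ : Ed d => ((inner ℝ w ξ : ℝ) : ℂ) := fun w =>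
    Complex.continuous_ofReal.comp (Continuous.inner continuous_const continuous_id)
  have hmeash : AEStronglyMeasurable (fun ξ => h ξ) μ := (Lp.memLp h).aestronglyMeasurable
  have hFall : ∀ y : Ed d, F y = 0 := by
    obtain ⟨x₀, hx₀⟩ := hUne
    obtain ⟨r₀, hr₀, hball⟩ := Metric.isOpen_iff.1 hU x₀ hx₀
    intro y
    set v : Ed d := y - x₀ with hv
    set G : ℂ → ℂ := fun t => ∫ ξ, Complex.exp (Complex.I * ((inner ℝ x₀ ξ : ℝ) : ℂ)
      + t * (Complex.I * ((inner ℝ v ξ : ℝ) : ℂ))) * h ξ ∂μ with hG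
    have hGreal : ∀ t : ℝ, G ((t : ℝ) : ℂ) = F (x₀ + t • v) := by
      intro t
      rw [hG, hF]
      simp only
      congr 1
      funext ξ
      congr 1
      rw [pk]
      congr 1
      have hinn : (inner ℝ (x₀ + t • v) ξ : ℝ) = (inner ℝ x₀ ξ : ℝ) + t * (inner ℝ v ξ : ℝ) := by
        rw [inner_add_left, real_inner_smul_left]
      rw [hinn]
      push_cast
      ring
    -- norm of the exponential factor
    have hexpnorm : ∀ (t : ℂ) (ξ : Ed d), ξ ∈ B →
        ‖Complex.exp (Complex.I * ((inner ℝ x₀ ξ : ℝ) : ℂ)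
          + t * (Complex.I * ((inner ℝ v ξ : ℝ) : ℂ)))‖ ≤ Real.exp (‖t‖ * (‖v‖ * R)) := by
      intro t ξ hξ
      have hξR : ‖ξ‖ ≤ R := mem_closedBall_zero_iff.1 (hB ▸ hξ)
      rw [Complex.norm_exp]
      apply Real.exp_le_exp.2
      have hre : (Complex.I * ((inner ℝ x₀ ξ : ℝ) : ℂ)
          + t * (Complex.I * ((inner ℝ v ξ : ℝ) : ℂ))).re = -t.im * (inner ℝ v ξ : ℝ) := by
        simp [Complex.add_re, Complex.mul_re, Complex.mul_im]
      rw [hre]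
      have h1 : |(inner ℝ v ξ : ℝ)| ≤ ‖v‖ * R := by
        refine (abs_real_inner_le_norm v ξ).trans ?_
        exact mul_le_mul_of_nonneg_left hξR (norm_nonneg v)
      have h2 : |t.im| ≤ ‖t‖ := Complex.abs_im_le_norm t
      calc -t.im * (inner ℝ v ξ : ℝ) ≤ |(-t.im) * (inner ℝ v ξ : ℝ)| := le_abs_self _
        _ = |t.im| * |(inner ℝ v ξ : ℝ)| := by rw [abs_mul, abs_neg]
        _ ≤ ‖t‖ * (‖v‖ * R) := by
            refine mul_le_mul h2 h1 (abs_nonneg _) (norm_nonneg t)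
    have hGdiff : Differentiable ℂ G := by
      intro t₀
      have hmeasF : ∀ t : ℂ, AEStronglyMeasurable (fun ξ => Complex.exp
          (Complex.I * ((inner ℝ x₀ ξ : ℝ) : ℂ) + t * (Complex.I * ((inner ℝ v ξ : ℝ) : ℂ))) * h ξ) μ := by
        intro t
        refine AEStronglyMeasurable.mul ?_ hmeash
        exact (Complex.continuous_exp.comp (((continuous_const.mul (hqc x₀))).add
          (continuous_const.mul (continuous_const.mul (hqc v))))).aestronglyMeasurable
      have key := hasDerivAt_integral_of_dominated_loc_of_deriv_le (μ := μ) (x₀ := t₀)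
        (F := fun (t : ℂ) ξ => Complex.exp (Complex.I * ((inner ℝ x₀ ξ : ℝ) : ℂ)
          + t * (Complex.I * ((inner ℝ v ξ : ℝ) : ℂ))) * h ξ)
        (F' := fun (t : ℂ) ξ => (Complex.exp (Complex.I * ((inner ℝ x₀ ξ : ℝ) : ℂ)
          + t * (Complex.I * ((inner ℝ v ξ : ℝ) : ℂ))) * (Complex.I * ((inner ℝ v ξ : ℝ) : ℂ))) * h ξ)
        (bound := fun ξ => Real.exp ((‖t₀‖ + 1) * (‖v‖ * R)) * (‖v‖ * R) * ‖h ξ‖)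
        (Metric.ball_mem_nhds t₀ one_pos) (Filter.Eventually.of_forall hmeasF) ?_ ?_ ?_ ?_ ?_
      · exact key.2.differentiableAt
      · -- integrability at t₀
        refine hInt.bdd_mul (c := Real.exp (‖t₀‖ * (‖v‖ * R))) ?_ ?_
        · exact (Complex.continuous_exp.comp (((continuous_const.mul (hqc x₀))).add
            (continuous_const.mul (continuous_const.mul (hqc v))))).aestronglyMeasurable
        · filter_upwards [haeB] with ξ hξ using hexpnorm t₀ ξ hξ
      · -- measurability of F' t₀
        refine AEStronglyMeasurable.mul ?_ hmeash
        exact ((Complex.continuous_exp.comp (((continuous_const.mul (hqc x₀))).add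
          (continuous_const.mul (continuous_const.mul (hqc v))))).mul
          (continuous_const.mul (hqc v))).aestronglyMeasurable
      · -- bound on F'
        filter_upwards [haeB] with ξ hξ
        intro t ht
        have hξR : ‖ξ‖ ≤ R := mem_closedBall_zero_iff.1 (hB ▸ hξ)
        have htle : ‖t‖ ≤ ‖t₀‖ + 1 := by
          have h3 : ‖t - t₀‖ < 1 := by rwa [mem_ball, dist_eq_norm] at ht
          calc ‖t‖ = ‖t₀ + (t - t₀)‖ := by ring_nf
            _ ≤ ‖t₀‖ + ‖t - t₀‖ := norm_add_le _ _
            _ ≤ ‖t₀‖ + 1 := by linarith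
        rw [norm_mul, norm_mul]
        have hIa : ‖Complex.I * ((inner ℝ v ξ : ℝ) : ℂ)‖ ≤ ‖v‖ * R := by
          rw [norm_mul, Complex.norm_I, one_mul, Complex.norm_real, Real.norm_eq_abs]
          refine (abs_real_inner_le_norm v ξ).trans ?_
          exact mul_le_mul_of_nonneg_left hξR (norm_nonneg v)
        have hexp2 : ‖Complex.exp (Complex.I * ((inner ℝ x₀ ξ : ℝ) : ℂ)
            + t * (Complex.I * ((inner ℝ v ξ : ℝ) : ℂ)))‖ ≤ Real.exp ((‖t₀‖ + 1) * (‖v‖ * R)) := by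
          refine (hexpnorm t ξ hξ).trans (Real.exp_le_exp.2 ?_)
          exact mul_le_mul_of_nonneg_right htle (by positivity)
        exact mul_le_mul (mul_le_mul hexp2 hIa (norm_nonneg _) (Real.exp_nonneg _))
          le_rfl (norm_nonneg _) (by positivity)
      · -- integrability of bound
        exact (hInt.norm.const_mul _)
      · -- differentiability in t
        filter_upwards with ξ
        intro t ht
        have h1 : HasDerivAt (fun t : ℂ => Complex.I * ((inner ℝ x₀ ξ : ℝ) : ℂ)
            + t * (Complex.I * ((inner ℝ v ξ : ℝ) : ℂ))) (Complex.I * ((inner ℝ v ξ : ℝ) : ℂ)) t := by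
          simpa using ((hasDerivAt_id t).mul_const (Complex.I * ((inner ℝ v ξ : ℝ) : ℂ))).const_add
            (Complex.I * ((inner ℝ x₀ ξ : ℝ) : ℂ))
        exact (h1.cexp).mul_const (h ξ)
    have hGanal : AnalyticOnNhd ℂ G Set.univ :=
      hGdiff.differentiableOn.analyticOnNhd isOpen_univ
    have hfreq : ∃ᶠ z in nhdsWithin (0 : ℂ) {(0 : ℂ)}ᶜ, G z = (fun _ => (0 : ℂ)) z := by
      set δ : ℝ := r₀ / (‖v‖ + 1) with hδdef
      have hδ : 0 < δ := div_pos hr₀ (by positivity)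
      have htt : Filter.Tendsto (fun n : ℕ => ((δ / (n + 1) : ℝ) : ℂ)) atTop
          (nhdsWithin (0 : ℂ) {(0 : ℂ)}ᶜ) := by
        rw [tendsto_nhdsWithin_iff]
        constructor
        · have hreal : Filter.Tendsto (fun n : ℕ => (δ / (n + 1) : ℝ)) atTop (nhds 0) := by
            have := tendsto_one_div_add_atTop_nhds_zero_nat.const_mul δ
            simpa [div_eq_mul_inv, one_div] using this
          have h4 := (Complex.continuous_ofReal.tendsto 0).comp hreal
          simpa [Function.comp_def] using h4
        · filter_upwards with n
          simp only [Set.mem_compl_iff, Set.mem_singleton_iff]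
          exact Complex.ofReal_ne_zero.2 (by positivity)
      refine htt.frequently (Filter.Eventually.frequently ?_)
      filter_upwards with n
      have hc1 : (0:ℝ) < (n:ℝ) + 1 := by positivity
      have hmem : x₀ + (δ / (n+1)) • v ∈ U := by
        apply hball
        have habs : 0 < δ / (n+1) := by positivity
        rw [mem_ball, dist_eq_norm, add_sub_cancel_left, norm_smul, Real.norm_eq_abs,
          abs_of_pos habs]
        have hle : δ / (n+1) ≤ δ := div_le_self hδ.le (by linarith)
        calc (δ/(n+1)) * ‖v‖ ≤ δ * ‖v‖ := by nlinarith [norm_nonneg v]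
          _ < δ * (‖v‖ + 1) := by nlinarith
          _ = r₀ := by rw [hδdef]; field_simp
      rw [hGreal (δ / (n+1))]
      exact hF0 _ hmem
    have hGzero : G = fun _ => 0 := hGanal.eq_of_frequently_eq analyticOnNhd_const hfreq
    have hFy : F y = G 1 := by
      have h1 : ((1:ℝ):ℂ) = 1 := by norm_num
      rw [← h1, hGreal 1, one_smul, hv, add_sub_cancel]
    rw [hFy, hGzero]
  -- step 3 : Stone-Weierstrass, conclude h = 0
  haveI hBc : CompactSpace B := isCompact_iff_compactSpace.1 (isCompact_closedBall (0 : Ed d) R)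
  set T : Ed d → C(B, ℂ) :=
    fun x => ⟨fun ξ => pk x ξ.1, (continuous_pk x).comp continuous_subtype_val⟩ with hT
  have hone : (1 : C(B, ℂ)) ∈ Submodule.span ℂ (Set.range T) := by
    refine Submodule.subset_span ⟨0, ?_⟩
    ext ξ
    exact pk_zero ξ.1
  have hspan_mul : ∀ a ∈ Submodule.span ℂ (Set.range T), ∀ b ∈ Submodule.span ℂ (Set.range T),
      a * b ∈ Submodule.span ℂ (Set.range T) := by
    intro a ha
    induction ha using Submodule.span_induction with
    | mem a' ha' =>
        intro b hb
        induction hb using Submodule.span_induction with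
        | mem b' hb' =>
            obtain ⟨x, rfl⟩ := ha'
            obtain ⟨y, rfl⟩ := hb'
            refine Submodule.subset_span ⟨x + y, ?_⟩
            ext ξ
            exact (pk_mul x y ξ.1).symm
        | zero => simpa [mul_zero] using Submodule.zero_mem _
        | add b₁ b₂ hb₁ hb₂ ih1 ih2 => simpa [mul_add] using Submodule.add_mem _ ih1 ih2
        | smul cc b' hb' ih => simpa [mul_smul_comm] using Submodule.smul_mem _ cc ih
    | zero => intro b hb; simpa [zero_mul] using Submodule.zero_mem _
    | add a₁ a₂ ha₁ ha₂ ih1 ih2 =>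
        intro b hb
        simpa [add_mul] using Submodule.add_mem _ (ih1 b hb) (ih2 b hb)
    | smul cc a' ha' ih =>
        intro b hb
        simpa [smul_mul_assoc] using Submodule.smul_mem _ cc (ih b hb)
  have hstar : ∀ a ∈ Submodule.span ℂ (Set.range T), star a ∈ Submodule.span ℂ (Set.range T) := by
    intro a ha
    induction ha using Submodule.span_induction with
    | mem a' ha' =>
        obtain ⟨x, rfl⟩ := ha'
        refine Submodule.subset_span ⟨-x, ?_⟩
        ext ξ
        exact (conj_pk x ξ.1).symm
    | zero => simpa using Submodule.zero_mem _
    | add a₁ a₂ ha₁ ha₂ ih1 ih2 => simpa [star_add] using Submodule.add_mem _ ih1 ih2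
    | smul cc a' ha' ih =>
        simpa [star_smul] using Submodule.smul_mem _ (starRingEnd ℂ cc) ih
  set SA : StarSubalgebra ℂ C(B, ℂ) :=
    { toSubalgebra := (Submodule.span ℂ (Set.range T)).toSubalgebra hone
        (fun a b ha hb => hspan_mul a ha b hb)
      star_mem' := fun {a} ha => hstar a ha } with hSA
  have hsepa : SA.SeparatesPoints := by
    intro ξ η hne
    have hvne : (ξ : Ed d) - η ≠ 0 := sub_ne_zero.2 (fun hc => hne (Subtype.ext hc))
    have hn2 : (0:ℝ) < ‖(ξ : Ed d) - η‖^2 := pow_pos (norm_pos_iff.2 hvne) 2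
    set w : Ed d := (Real.pi / ‖(ξ : Ed d) - η‖^2) • ((ξ : Ed d) - η) with hw
    refine ⟨_, ⟨T w, Submodule.subset_span ⟨w, rfl⟩, rfl⟩, ?_⟩
    have hdiffinner : (inner ℝ w (ξ:Ed d) : ℝ) = (inner ℝ w (η:Ed d) : ℝ) + Real.pi := by
      have h5 : (inner ℝ w (ξ:Ed d) : ℝ) - (inner ℝ w (η:Ed d) : ℝ) = Real.pi := by
        rw [← inner_sub_right, hw, real_inner_smul_left, real_inner_self_eq_norm_sq]
        field_simp
      linarith
    have heval : T w ξ = - T w η := by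
      show pk w ξ.1 = - pk w η.1
      rw [pk, pk, hdiffinner]
      push_cast
      rw [mul_add, Complex.exp_add, mul_comm Complex.I (Real.pi : ℂ), Complex.exp_pi_mul_I]
      ring
    intro hcon
    have hcon' : (T w) ξ = (T w) η := hcon
    rw [heval] at hcon'
    have hcon2 : - pk w η.1 = pk w η.1 := hcon'
    have h6 : pk w η.1 = 0 := by
      have h7 : (2:ℂ) * pk w η.1 = 0 := by linear_combination (-1 : ℂ) * hcon2
      simpa using h7
    exact Complex.exp_ne_zero _ h6
  have hSW : SA.topologicalClosure = ⊤ :=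
    ContinuousMap.starSubalgebra_topologicalClosure_eq_top_of_separatesPoints SA hsepa
  -- the main claim: integrating any bounded continuous function against h gives 0
  have claimC : ∀ (w : Ed d → ℂ), Continuous w → ∀ Cw : ℝ, (∀ ξ, ‖w ξ‖ ≤ Cw) →
      ∫ ξ, w ξ * h ξ ∂μ = 0 := by
    intro w hw Cw hwb
    have hwh : Integrable (fun ξ => w ξ * h ξ) μ :=
      hInt.bdd_mul hw.aestronglyMeasurable (Filter.Eventually.of_forall hwb)
    set Cn : ℝ := ∫ ξ, ‖h ξ‖ ∂μ with hCn
    have hCn0 : 0 ≤ Cn := integral_nonneg fun _ => norm_nonneg _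
    have key : ∀ δ : ℝ, 0 < δ → ‖∫ ξ, w ξ * h ξ ∂μ‖ ≤ δ * Cn := by
      intro δ hδ
      set wK : C(B, ℂ) := ⟨fun ξ => w ξ.1, hw.comp continuous_subtype_val⟩ with hwK
      have hwKcl : wK ∈ closure (SA : Set C(B, ℂ)) := by
        rw [← StarSubalgebra.topologicalClosure_coe, hSW]
        exact StarSubalgebra.mem_top
      obtain ⟨u, hu_mem, hu_close⟩ := Metric.mem_closure_iff.1 hwKcl δ hδ
      have hu_span : u ∈ Submodule.span ℂ (Set.range T) := hu_mem
      obtain ⟨n, c, gen, hsum⟩ := Submodule.mem_span_set'.1 hu_span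
      choose xs hxs using fun i => (gen i).2
      set W : Ed d → ℂ := fun ξ => ∑ i, c i * pk (xs i) ξ with hW
      have hWh : Integrable (fun ξ => W ξ * h ξ) μ := by
        have : (fun ξ => W ξ * h ξ) = fun ξ => ∑ i, c i • (pk (xs i) ξ * h ξ) := by
          funext ξ
          rw [hW]
          simp only [smul_eq_mul, Finset.sum_mul]
          exact Finset.sum_congr rfl fun i _ => by ring
        rw [this]
        exact integrable_finset_sum _ fun i _ => ((hIntMul (xs i)).smul (c i))
      have hWint0 : ∫ ξ, W ξ * h ξ ∂μ = 0 := by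
        have h8 : (fun ξ => W ξ * h ξ) = fun ξ => ∑ i, c i • (pk (xs i) ξ * h ξ) := by
          funext ξ
          rw [hW]
          simp only [smul_eq_mul, Finset.sum_mul]
          exact Finset.sum_congr rfl fun i _ => by ring
        rw [h8, integral_finset_sum (μ := μ) Finset.univ
          (f := fun i (ξ : Ed d) => c i • (pk (xs i) ξ * h ξ))
          (fun i _ => ((hIntMul (xs i)).smul (c i)))]
        refine Finset.sum_eq_zero fun i _ => ?_
        rw [integral_smul]
        have h9 : ∫ ξ, pk (xs i) ξ * h ξ ∂μ = 0 := hFall (xs i)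
        rw [h9, smul_zero]
      have hbound : ∀ᵐ ξ ∂μ, ‖w ξ - W ξ‖ ≤ δ := by
        filter_upwards [haeB] with ξ hξ
        have hWval : W ξ = u ⟨ξ, hξ⟩ := by
          rw [← hsum]
          have h10 : ((∑ i, c i • (gen i : C(B, ℂ))) : C(B, ℂ)) ⟨ξ, hξ⟩
              = ∑ i, c i • ((gen i : C(B, ℂ)) ⟨ξ, hξ⟩) := by
            simp
          rw [h10, hW]
          refine Finset.sum_congr rfl fun i _ => ?_
          rw [← hxs i]
          simp [hT, pk]
        have h11 : w ξ - W ξ = wK ⟨ξ, hξ⟩ - u ⟨ξ, hξ⟩ := by rw [hWval]; rfl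
        rw [h11, ← ContinuousMap.sub_apply]
        refine (ContinuousMap.norm_coe_le_norm _ _).trans ?_
        rw [← dist_eq_norm]
        exact hu_close.le
      have hsubInt : Integrable (fun ξ => (w ξ - W ξ) * h ξ) μ := by
        have : (fun ξ => (w ξ - W ξ) * h ξ) = fun ξ => w ξ * h ξ - W ξ * h ξ := by
          funext ξ; ring
        rw [this]
        exact hwh.sub hWh
      have hcalc : ∫ ξ, w ξ * h ξ ∂μ = ∫ ξ, (w ξ - W ξ) * h ξ ∂μ := by
        have h12 : (fun ξ => (w ξ - W ξ) * h ξ) = fun ξ => w ξ * h ξ - W ξ * h ξ := by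
          funext ξ; ring
        rw [h12, integral_sub hwh hWh, hWint0, sub_zero]
      rw [hcalc]
      calc ‖∫ ξ, (w ξ - W ξ) * h ξ ∂μ‖ ≤ ∫ ξ, ‖(w ξ - W ξ) * h ξ‖ ∂μ :=
            norm_integral_le_integral_norm _
        _ ≤ ∫ ξ, δ * ‖h ξ‖ ∂μ := by
            refine integral_mono_ae hsubInt.norm (hInt.norm.const_mul δ) ?_
            filter_upwards [hbound] with ξ hb
            rw [norm_mul]
            exact mul_le_mul_of_nonneg_right hb (norm_nonneg _)
        _ = δ * Cn := by rw [integral_const_mul]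
    by_contra hne
    have hpos : 0 < ‖∫ ξ, w ξ * h ξ ∂μ‖ := norm_pos_iff.2 hne
    have hk := key (‖∫ ξ, w ξ * h ξ ∂μ‖ / (2 * (Cn + 1))) (by positivity)
    rw [div_mul_eq_mul_div, le_div_iff₀ (by positivity)] at hk
    nlinarith
  -- conclude h = 0 using density of bounded continuous functions
  have hinner0 : ∀ v : BoundedContinuousFunction (Ed d) ℂ,
      (inner ℂ ((BoundedContinuousFunction.toLp (E := ℂ) 2 μ ℂ) v) h : ℂ) = 0 := by
    intro v
    rw [L2.inner_def]
    have heq : ∫ a, (inner ℂ (((BoundedContinuousFunction.toLp (E := ℂ) 2 μ ℂ) v) a) (h a) : ℂ) ∂μ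
        = ∫ a, (starRingEnd ℂ) (v a) * h a ∂μ := by
      apply integral_congr_ae
      filter_upwards [BoundedContinuousFunction.coeFn_toLp 2 μ ℂ v] with a ha
      rw [RCLike.inner_apply, ha, mul_comm]
    rw [heq]
    refine claimC _ (continuous_star.comp v.continuous) ‖v‖ fun ξ => ?_
    rw [RCLike.norm_conj]
    exact BoundedContinuousFunction.norm_coe_le_norm v ξ
  have hdense := BoundedContinuousFunction.toLp_denseRange (E := ℂ) μ (p := 2) ℂ
    (by norm_num : (2 : ENNReal) ≠ ⊤)
  obtain ⟨seq, hseqmem, hseqlim⟩ := mem_closure_iff_seq_limit.1 (hdense h)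
  have htend : Filter.Tendsto (fun n => (inner ℂ (seq n) h : ℂ)) atTop (nhds (inner ℂ h h)) :=
    hseqlim.inner tendsto_const_nhds
  have hz : ∀ n, (inner ℂ (seq n) h : ℂ) = 0 := fun n => by
    obtain ⟨v, hv⟩ := hseqmem n
    rw [← hv]
    exact hinner0 v
  have hhh : (inner ℂ h h : ℂ) = 0 := by
    have h2 : Filter.Tendsto (fun _ : ℕ => (0:ℂ)) atTop (nhds (inner ℂ h h)) := by
      simpa [hz] using htend
    exact tendsto_nhds_unique h2 tendsto_const_nhds
  exact inner_self_eq_zero.1 hhh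


lemma ftransform_eq_fourierIntegral (φ : Ed d → ℂ) (ξ : Ed d) :
    ftransform φ ξ = FourierTransform.fourier φ ((2 * Real.pi)⁻¹ • ξ) := by
  rw [Real.fourier_eq, ftransform]
  congr 1
  funext v
  rw [real_inner_smul_right, Circle.smul_def, Real.fourierChar_apply]
  have hπ : (2 * Real.pi) ≠ 0 := by positivity
  have h2 : 2 * Real.pi * -((2 * Real.pi)⁻¹ * (inner ℝ v ξ : ℝ)) = -(inner ℝ v ξ : ℝ) := by
    field_simp
  rw [h2]
  rw [show ((-(inner ℝ v ξ : ℝ) : ℝ) : ℂ) * Complex.I = -(Complex.I * ((inner ℝ v ξ : ℝ) : ℂ)) by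
    push_cast; ring]
  rw [smul_eq_mul]
  ring

lemma continuous_ftransform {φ : Ed d → ℂ} (hφ : Integrable φ volume) :
    Continuous (ftransform φ) := by
  have h1 : Continuous (FourierTransform.fourier φ) :=
    VectorFourier.fourierIntegral_continuous Real.continuous_fourierChar
      (by exact continuous_inner) hφ
  have h2 : ftransform φ = fun ξ => FourierTransform.fourier φ ((2 * Real.pi)⁻¹ • ξ) :=
    funext fun ξ => ftransform_eq_fourierIntegral φ ξ
  rw [h2]
  exact h1.comp (continuous_const_smul _)

lemma norm_ftransform_le {φ : Ed d → ℂ} (ξ : Ed d) :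
    ‖ftransform φ ξ‖ ≤ ∫ x, ‖φ x‖ := by
  rw [ftransform_apply]
  refine (norm_integral_le_integral_norm _).trans (le_of_eq ?_)
  congr 1
  funext x
  rw [norm_mul, norm_nk, mul_one]

end FDense

open FDense Metric in
/-- Fourier restriction from functions supported in a closed set `A` with nonempty interior
to `L²` of a closed ball `B` has dense image. -/
theorem stmt1 (d : ℕ) (hd : 1 ≤ d) (A : Set (EuclideanSpace ℝ (Fin d)))
    (hAclosed : IsClosed A) (hAint : (interior A).Nonempty)
    (R : ℝ) (hR : 0 < R)
    (g : EuclideanSpace ℝ (Fin d) → ℂ)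
    (hg : MemLp g 2 (volume.restrict (Metric.closedBall (0 : EuclideanSpace ℝ (Fin d)) R)))
    (ε : ℝ) (hε : 0 < ε) :
    ∃ φ : EuclideanSpace ℝ (Fin d) → ℂ,
      Integrable φ volume ∧ MemLp φ 2 volume ∧ Function.support φ ⊆ A ∧
      ∫ ξ in Metric.closedBall (0 : EuclideanSpace ℝ (Fin d)) R,
        ‖ftransform φ ξ - g ξ‖ ^ 2 < ε ^ 2 := by
  classical
  set B := Metric.closedBall (0 : EuclideanSpace ℝ (Fin d)) R with hB
  set μ := volume.restrict B with hμ
  have hdense := dense_exp_span d R hR (interior A) isOpen_interior hAint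
  set gL := hg.toLp g with hgL
  have hgcl : gL ∈ closure
      ((Submodule.span ℂ ((fun x => (memℒp_nk R x).toLp (nk x)) '' interior A) :
        Submodule ℂ (Lp ℂ 2 μ)) : Set (Lp ℂ 2 μ)) := by
    have h1 : gL ∈ (Submodule.span ℂ
        ((fun x => (memℒp_nk R x).toLp (nk x)) '' interior A)).topologicalClosure := by
      rw [hdense]; exact Submodule.mem_top
    exact h1
  obtain ⟨u, huS, hud⟩ := Metric.mem_closure_iff.1 hgcl (ε/2) (half_pos hε)
  have hu_span : u ∈ Submodule.span ℂ ((fun x => (memℒp_nk R x).toLp (nk x)) '' interior A) := huS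
  obtain ⟨n, c, gen, hsum⟩ := Submodule.mem_span_set'.1 hu_span
  have hgen : ∀ i, ∃ x, x ∈ interior A ∧ (memℒp_nk R x).toLp (nk x) = (gen i : Lp ℂ 2 μ) := by
    intro i
    obtain ⟨x, hx1, hx2⟩ := (gen i).2
    exact ⟨x, hx1, hx2⟩
  choose xs hxsmem hxsE using hgen
  have hrad : ∀ i, ∃ ρ, 0 < ρ ∧ closedBall (xs i) ρ ⊆ A := by
    intro i
    obtain ⟨ρ, hρ, hb⟩ := Metric.isOpen_iff.1 isOpen_interior (xs i) (hxsmem i)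
    refine ⟨ρ/2, by positivity, ?_⟩
    refine subset_trans (closedBall_subset_ball (by linarith)) (hb.trans interior_subset)
  choose ρ hρpos hρsub using hrad
  have hsumc0 : (0:ℝ) ≤ ∑ i, ‖c i‖ := Finset.sum_nonneg fun i _ => norm_nonneg _
  set Vb : ℝ := ((μ Set.univ) ^ ((2:ENNReal).toReal⁻¹)).toReal with hVb
  have hVb0 : 0 ≤ Vb := ENNReal.toReal_nonneg
  set δ : ℝ := (ε/2) / (Vb * (∑ i, ‖c i‖) * R + 1) with hδ
  have hδ0 : 0 < δ := by positivity
  -- bumps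
  have hbump := fun i : Fin n => bump R hR (xs i) (r := min (ρ i) δ)
    (lt_min (hρpos i) hδ0)
  choose φs hφInt hφMem hφsup hφapprox using hbump
  set φ : EuclideanSpace ℝ (Fin d) → ℂ := fun y => ∑ i, c i • φs i y with hφ
  have hφint : Integrable φ volume := integrable_finset_sum _ fun i _ => (hφInt i).smul (c i)
  have hφmem : MemLp φ 2 volume := by
    have hm := memLp_finset_sum' (μ := volume) Finset.univ
      (f := fun i => c i • φs i) (fun i _ => ((hφMem i).const_smul (c i)))
    have heq : (∑ i, c i • φs i) = φ := by
      funext y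
      rw [hφ]
      simp
    rwa [heq] at hm
  have hφsupp : Function.support φ ⊆ A := by
    intro y hy
    have hex : ∃ i : Fin n, c i • φs i y ≠ 0 := by
      by_contra hcon
      push_neg at hcon
      exact hy (Finset.sum_eq_zero fun i _ => hcon i)
    obtain ⟨i, hi⟩ := hex
    have h2 : φs i y ≠ 0 := fun hzz => hi (by rw [hzz, smul_zero])
    have h3 : y ∈ closedBall (xs i) (min (ρ i) δ) := hφsup i h2
    exact hρsub i (closedBall_subset_closedBall (min_le_left _ _) h3)
  have hft : ∀ ξ, ftransform φ ξ = ∑ i, c i * ftransform (φs i) ξ :=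
    ftransform_sum c φs hφInt
  have hWapprox : ∀ ξ ∈ B, ‖ftransform φ ξ - ∑ i, c i * nk (xs i) ξ‖
      ≤ (∑ i, ‖c i‖) * (δ * R) := by
    intro ξ hξ
    rw [hft ξ, ← Finset.sum_sub_distrib]
    refine (norm_sum_le _ _).trans ?_
    rw [Finset.sum_mul]
    refine Finset.sum_le_sum fun i _ => ?_
    rw [show c i * ftransform (φs i) ξ - c i * nk (xs i) ξ
      = c i * (ftransform (φs i) ξ - nk (xs i) ξ) by ring, norm_mul]
    refine mul_le_mul_of_nonneg_left ?_ (norm_nonneg _)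
    refine (hφapprox i ξ (hB ▸ hξ)).trans ?_
    exact mul_le_mul_of_nonneg_right (min_le_right _ _) hR.le
  have hftmem : MemLp (ftransform φ) 2 μ :=
    MemLp.of_bound (continuous_ftransform hφint).aestronglyMeasurable (∫ x, ‖φ x‖)
      (Filter.Eventually.of_forall fun ξ => norm_ftransform_le ξ)
  set fL := hftmem.toLp (ftransform φ) with hfL
  -- identify u as a function a.e.
  have hu_coe : ⇑u =ᵐ[μ] fun ξ => ∑ i, c i * nk (xs i) ξ := by
    rw [← hsum]
    have hstep : ∀ s : Finset (Fin n),
        ⇑(∑ i ∈ s, c i • (gen i : Lp ℂ 2 μ))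
          =ᵐ[μ] fun ξ => ∑ i ∈ s, c i * nk (xs i) ξ := by
      intro s
      induction s using Finset.induction_on with
      | empty =>
          rw [Finset.sum_empty]
          refine (Lp.coeFn_zero (E := ℂ) 2 μ).trans ?_
          refine Filter.Eventually.of_forall fun ξ => ?_
          simp
      | insert a s' hnotmem ih =>
          rw [Finset.sum_insert hnotmem]
          refine (Lp.coeFn_add _ _).trans ?_
          have hsm : ⇑(c a • (gen a : Lp ℂ 2 μ))
              =ᵐ[μ] fun ξ => c a * nk (xs a) ξ := by
            refine (Lp.coeFn_smul _ _).trans ?_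
            have hco := MemLp.coeFn_toLp (memℒp_nk R (xs a))
            rw [hxsE a] at hco
            filter_upwards [hco] with ξ hξ
            rw [Pi.smul_apply, hξ, smul_eq_mul]
          filter_upwards [hsm, ih] with ξ h1 h2
          rw [Pi.add_apply, h1, h2, Finset.sum_insert hnotmem]
    exact hstep Finset.univ
  have hnorm1 : ‖fL - u‖ ≤ Vb * ((∑ i, ‖c i‖) * (δ * R)) := by
    have hae : ⇑(fL - u) =ᵐ[μ]
        fun ξ => ftransform φ ξ - ∑ i, c i * nk (xs i) ξ := by
      filter_upwards [Lp.coeFn_sub fL u, hftmem.coeFn_toLp, hu_coe] with ξ h1 h2 h3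
      rw [h1, Pi.sub_apply, h2, h3]
    rw [Lp.norm_def, eLpNorm_congr_ae hae]
    have hle := eLpNorm_le_of_ae_bound (μ := μ) (p := 2)
      (C := (∑ i, ‖c i‖) * (δ * R))
      (f := fun ξ => ftransform φ ξ - ∑ i, c i * nk (xs i) ξ)
      (by filter_upwards [ae_restrict_mem measurableSet_closedBall] with ξ hξ
          exact hWapprox ξ hξ)
    have hfin : (μ Set.univ) ^ ((2:ENNReal).toReal⁻¹) ≠ ⊤ :=
      ENNReal.rpow_ne_top_of_nonneg (by norm_num) (measure_ne_top μ _)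
    calc (eLpNorm _ 2 μ).toReal
        ≤ ((μ Set.univ ^ (2:ENNReal).toReal⁻¹) * ENNReal.ofReal ((∑ i, ‖c i‖) * (δ * R))).toReal := by
          refine ENNReal.toReal_mono ?_ hle
          exact ENNReal.mul_ne_top hfin ENNReal.ofReal_ne_top
      _ = Vb * ((∑ i, ‖c i‖) * (δ * R)) := by
          rw [ENNReal.toReal_mul, ENNReal.toReal_ofReal (by positivity)]
  have hhalf : ‖fL - u‖ < ε / 2 := by
    refine lt_of_le_of_lt hnorm1 ?_
    have hkey : Vb * ((∑ i, ‖c i‖) * (δ * R)) = δ * (Vb * (∑ i, ‖c i‖) * R) := by ring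
    rw [hkey, hδ]
    rw [div_mul_eq_mul_div, div_lt_iff₀ (by positivity)]
    have hX : (0:ℝ) ≤ Vb * (∑ i, ‖c i‖) * R := by positivity
    nlinarith [half_pos hε]
  have hdist : ‖fL - gL‖ < ε := by
    calc ‖fL - gL‖ = ‖(fL - u) + (u - gL)‖ := by rw [sub_add_sub_cancel]
      _ ≤ ‖fL - u‖ + ‖u - gL‖ := norm_add_le _ _
      _ < ε/2 + ε/2 := by
          refine add_lt_add hhalf ?_
          rw [← dist_eq_norm, dist_comm]
          exact hud
      _ = ε := by ring
  refine ⟨φ, hφint, hφmem, hφsupp, ?_⟩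
  have key : ∫ ξ, ‖ftransform φ ξ - g ξ‖^2 ∂μ = ‖fL - gL‖^2 := by
    have h1 : ‖fL - gL‖^2 = RCLike.re (inner ℂ (fL - gL) (fL - gL) : ℂ) :=
      (inner_self_eq_norm_sq (𝕜 := ℂ) _).symm
    rw [h1, L2.inner_def, ← integral_re (L2.integrable_inner _ _)]
    apply integral_congr_ae
    filter_upwards [Lp.coeFn_sub fL gL, hftmem.coeFn_toLp, hg.coeFn_toLp] with ξ h2 h3 h4
    rw [h2, Pi.sub_apply, h3, h4]
    exact (inner_self_eq_norm_sq (𝕜 := ℂ) _).symm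
  rw [key]
  have : (0:ℝ) ≤ ‖fL - gL‖ := norm_nonneg _
  nlinarith
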